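/- arXiv:1808.04873 — 5 statements merged into one kernel-verified Lean document; each statement's English description precedes it below -/
import Mathlib

section
/- With the setting of the previous statement, additionally define the augmented vector field μ^β(θ, s) = μ(θ, s) − β · ∇_s C(θ, s) and suppose s^β(θ) is differentiable in (θ, β) with μ^β(θ, s^β(θ)) = 0 and s^0(θ) = s⁰(θ). Define ν(θ) = −∂C/∂θ(θ, s⁰(θ)) + (∂μ/∂θ(θ, s⁰(θ)))ᵀ · (∂s^β/∂β)|_{β=0}. Then ν(θ) = −∂C/∂θ(θ, s⁰(θ)) + ∂C/∂s(θ, s⁰(θ)) · ((∂μ/∂s(θ, s⁰(θ)))ᵀ)⁻¹ · ∂μ/∂θ(θ, s⁰(θ)). -/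
/-!
Differentiating the fixed-point identity `μ(θ, s^β(θ)) = β • ∇ₛC(θ, s^β(θ))` at `β = 0` gives
`J (∂s^β/∂β) = ∇ₛC(θ, s⁰(θ))`: the right-hand side has derivative `∇ₛC` at `0` as soon as `∇ₛC` is
continuous along the curve, which is where `C ∈ C¹` enters. Pairing with `∂μ/∂θ · θ'` and moving `J`
across the dot product onto `JT⁻¹` gives the formula.
-/

open Matrix Asymptotics

theorem hasDerivAt_smul_self_of_continuousAt {𝕜 E : Type*} [NontriviallyNormedField 𝕜]
    [NormedAddCommGroup E] [NormedSpace 𝕜 E] {g : 𝕜 → E} (hg : ContinuousAt g 0) :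
    HasDerivAt (fun t => t • g t) (g 0) 0 := by
  rw [hasDerivAt_iff_isLittleO]
  have hsmul : (fun t : 𝕜 => t • (g t - g 0)) =o[nhds 0] fun t => t • (1 : 𝕜) :=
    (isBigO_refl _ _).smul_isLittleO
      ((isLittleO_one_iff 𝕜).mpr (tendsto_sub_nhds_zero_iff.mpr hg))
  simpa [smul_sub] using hsmul

theorem HasFDerivAt.apply_eq_of_comp_eq_smul {𝕜 E F : Type*} [NontriviallyNormedField 𝕜]
    [NormedAddCommGroup E] [NormedSpace 𝕜 E] [NormedAddCommGroup F] [NormedSpace 𝕜 F]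
    {f : E → F} {f' : E →L[𝕜] F} {σ : 𝕜 → E} {σ' : E} {g : 𝕜 → F}
    (hf : HasFDerivAt f f' (σ 0)) (hσ : HasDerivAt σ σ' 0) (hg : ContinuousAt g 0)
    (hfσ : ∀ t, f (σ t) = t • g t) : f' σ' = g 0 := by
  have hcomp : HasDerivAt (fun t => t • g t) (f' σ') 0 := by
    rw [show (fun t => t • g t) = f ∘ σ from funext fun t => (hfσ t).symm]
    exact hf.comp_hasDerivAt 0 hσ
  exact hcomp.unique (hasDerivAt_smul_self_of_continuousAt hg)

theorem LinearMap.apply_eq_dotProduct_single {R ι : Type*} [CommSemiring R] [Fintype ι]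
    [DecidableEq ι] (L : (ι → R) →ₗ[R] R) (w : ι → R) :
    L w = w ⬝ᵥ fun i => L (Pi.single i 1) := by
  rw [L.pi_apply_eq_sum_univ w, dotProduct]
  congr! with i
  rw [Pi.single_apply]
  exact if_congr eq_comm rfl rfl

theorem stmt_3_general {n p : ℕ}
    (μ : (Fin p → ℝ) → (Fin n → ℝ) → (Fin n → ℝ))
    (C : (Fin p → ℝ) → (Fin n → ℝ) → ℝ)
    (hμ : ContDiff ℝ 1 (fun q : (Fin p → ℝ) × (Fin n → ℝ) => μ q.1 q.2))
    (hC : ContDiff ℝ 1 (fun q : (Fin p → ℝ) × (Fin n → ℝ) => C q.1 q.2))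
    (s0 : (Fin p → ℝ) → (Fin n → ℝ))
    (θ : Fin p → ℝ)
    (J : (Fin n → ℝ) ≃L[ℝ] (Fin n → ℝ))
    (hJ : (J : (Fin n → ℝ) →L[ℝ] (Fin n → ℝ)) = fderiv ℝ (fun s => μ θ s) (s0 θ))
    (JT : (Fin n → ℝ) ≃L[ℝ] (Fin n → ℝ))
    (hJT : ∀ u w, JT u ⬝ᵥ w = u ⬝ᵥ J w)
    -- the fixed points `s^β(θ)` of the augmented vector field
    -- `μ^β(θ,s) = μ(θ,s) − β ∇_s C(θ,s)`
    (sβ : ℝ → (Fin p → ℝ) → (Fin n → ℝ))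
    (hsβ : Differentiable ℝ (fun q : ℝ × (Fin p → ℝ) => sβ q.1 q.2))
    (hsβfix : ∀ β θ', μ θ' (sβ β θ') =
      β • (fun i => fderiv ℝ (fun s => C θ' s) (sβ β θ') (Pi.single i 1)))
    (hsβ0 : sβ 0 = s0) :
    ∀ θ' : Fin p → ℝ,
      -(fderiv ℝ (fun θ'' => C θ'' (s0 θ)) θ θ') +
          (fderiv ℝ (fun θ'' => μ θ'' (s0 θ)) θ θ') ⬝ᵥ (deriv (fun β => sβ β θ) 0)
        =
      -(fderiv ℝ (fun θ'' => C θ'' (s0 θ)) θ θ') +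
          fderiv ℝ (fun s => C θ s) (s0 θ)
            (JT.symm (fderiv ℝ (fun θ'' => μ θ'' (s0 θ)) θ θ')) := by
  intro θ'
  congr 1
  set σ : ℝ → (Fin n → ℝ) := fun β => sβ β θ
  set gradC : (Fin n → ℝ) → (Fin n → ℝ) := fun s i => fderiv ℝ (C θ) s (Pi.single i 1)
  have hσ : Differentiable ℝ σ := hsβ.comp (differentiable_id.prodMk (differentiable_const θ))
  have hσ0 : σ 0 = s0 θ := by simp [σ, hsβ0]
  have hμθ : Differentiable ℝ (μ θ) :=
    (hμ.comp (contDiff_const.prodMk contDiff_id)).differentiable one_ne_zero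
  have hgradC : Continuous gradC :=
    continuous_pi fun i => ((hC.comp (contDiff_const.prodMk contDiff_id)).continuous_fderiv
      one_ne_zero).clm_apply continuous_const
  have hJσ' : J (deriv σ 0) = gradC (s0 θ) := by
    have hμσ0 : HasFDerivAt (μ θ) (J : (Fin n → ℝ) →L[ℝ] (Fin n → ℝ)) (σ 0) := by
      rw [hJ, hσ0]; exact (hμθ _).hasFDerivAt
    rw [← hσ0]
    exact hμσ0.apply_eq_of_comp_eq_smul (hσ 0).hasDerivAt
      (hgradC.comp hσ.continuous).continuousAt (hsβfix · θ)
  set v := fderiv ℝ (fun θ'' => μ θ'' (s0 θ)) θ θ'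
  calc v ⬝ᵥ deriv σ 0
      = JT.symm v ⬝ᵥ J (deriv σ 0) := by rw [← hJT, JT.apply_symm_apply]
    _ = JT.symm v ⬝ᵥ gradC (s0 θ) := by rw [hJσ']
    _ = fderiv ℝ (C θ) (s0 θ) (JT.symm v) :=
      ((fderiv ℝ (C θ) (s0 θ) : (Fin n → ℝ) →ₗ[ℝ] ℝ).apply_eq_dotProduct_single _).symm

/-- Theorem 1 (Eq. 31): explicit formula for the Equilibrium Propagation update
vector field `ν`.  Here `ν(θ)` is defined, as a function of a direction `θ'` in
parameter space via the dual pairing, by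
`ν(θ) = −∂C/∂θ(θ, s⁰(θ)) + (∂μ/∂θ)ᵀ · (∂s^β/∂β)|_{β=0}`, and the claim is that it
equals `−∂C/∂θ + ∂C/∂s · ((∂μ/∂s)ᵀ)⁻¹ · ∂μ/∂θ`, everything evaluated at the free
fixed point `s⁰(θ)`.  `JT` is the transpose of the Jacobian `J = ∂μ/∂s(θ, s⁰(θ))`. -/
theorem stmt_3 {n p : ℕ}
    (μ : (Fin p → ℝ) → (Fin n → ℝ) → (Fin n → ℝ))
    (C : (Fin p → ℝ) → (Fin n → ℝ) → ℝ)
    (hμ : ContDiff ℝ 1 (fun q : (Fin p → ℝ) × (Fin n → ℝ) => μ q.1 q.2))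
    (hC : ContDiff ℝ 1 (fun q : (Fin p → ℝ) × (Fin n → ℝ) => C q.1 q.2))
    (s0 : (Fin p → ℝ) → (Fin n → ℝ))
    (hs0 : Differentiable ℝ s0)
    (hfix : ∀ θ, μ θ (s0 θ) = 0)
    (θ : Fin p → ℝ)
    (J : (Fin n → ℝ) ≃L[ℝ] (Fin n → ℝ))
    (hJ : (J : (Fin n → ℝ) →L[ℝ] (Fin n → ℝ)) = fderiv ℝ (fun s => μ θ s) (s0 θ))
    (JT : (Fin n → ℝ) ≃L[ℝ] (Fin n → ℝ))
    (hJT : ∀ u w, JT u ⬝ᵥ w = u ⬝ᵥ J w)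
    -- the fixed points `s^β(θ)` of the augmented vector field
    -- `μ^β(θ,s) = μ(θ,s) − β ∇_s C(θ,s)`
    (sβ : ℝ → (Fin p → ℝ) → (Fin n → ℝ))
    (hsβ : Differentiable ℝ (fun q : ℝ × (Fin p → ℝ) => sβ q.1 q.2))
    (hsβfix : ∀ β θ', μ θ' (sβ β θ') =
      β • (fun i => fderiv ℝ (fun s => C θ' s) (sβ β θ') (Pi.single i 1)))
    (hsβ0 : sβ 0 = s0) :
    ∀ θ' : Fin p → ℝ,
      -(fderiv ℝ (fun θ'' => C θ'' (s0 θ)) θ θ') +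
          (fderiv ℝ (fun θ'' => μ θ'' (s0 θ)) θ θ') ⬝ᵥ (deriv (fun β => sβ β θ) 0)
        =
      -(fderiv ℝ (fun θ'' => C θ'' (s0 θ)) θ θ') +
          fderiv ℝ (fun s => C θ s) (s0 θ)
            (JT.symm (fderiv ℝ (fun θ'' => μ θ'' (s0 θ)) θ θ')) :=
  stmt_3_general μ C hμ hC s0 θ J hJ JT hJT sβ hsβ hsβfix hsβ0
end

section
/- Let μ : ℝⁿ → ℝⁿ and C : ℝⁿ → ℝ be continuously differentiable, let μ^β(s) = μ(s) − β ∇C(s), and let β ↦ s^β be a differentiable curve of fixed points (μ^β(s^β) = 0) such that the Jacobian ∂μ^β/∂s(s^β) is negative semidefinite at β = 0 (stability). Then the derivative of β ↦ C(s^β) at β = 0 is non-positive. -/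
/-!
Differentiating the fixed-point identity `μ(s^β) = β ∇C(s^β)` at `β = 0` gives
`Dμ(s⁰) ṡ⁰ = ∇C(s⁰)`; continuity of `∇C` is what makes the derivative of the right-hand side
equal to `∇C(s⁰)`. Hence `d/dβ C(s^β) = ∇C(s⁰) ⬝ ṡ⁰ = ṡ⁰ ⬝ Dμ(s⁰) ṡ⁰ ≤ 0` at `β = 0`.
-/

open Matrix

theorem hasDerivAt_smul_self_zero {E : Type*} [NormedAddCommGroup E] [NormedSpace ℝ E]
    {g : ℝ → E} (hg : ContinuousAt g 0) :
    HasDerivAt (fun β => β • g β) (g 0) 0 := by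
  rw [hasDerivAt_iff_tendsto_slope]
  have slope_eq : ∀ᶠ β in nhdsWithin 0 {(0 : ℝ)}ᶜ, g β = slope (fun β => β • g β) 0 β := by
    filter_upwards [self_mem_nhdsWithin] with β (hβ : β ≠ 0)
    simp only [slope, vsub_eq_sub, sub_zero, zero_smul, smul_smul, inv_mul_cancel₀ hβ, one_smul]
  exact hg.tendsto.mono_left nhdsWithin_le_nhds |>.congr' slope_eq

theorem fderiv_apply_deriv_eq_of_comp_eq_smul {E F : Type*}
    [NormedAddCommGroup E] [NormedSpace ℝ E] [NormedAddCommGroup F] [NormedSpace ℝ F]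
    {μ : E → F} {s : ℝ → E} {g : ℝ → F}
    (hμ : DifferentiableAt ℝ μ (s 0)) (hs : DifferentiableAt ℝ s 0) (hg : ContinuousAt g 0)
    (hfix : ∀ β, μ (s β) = β • g β) :
    fderiv ℝ μ (s 0) (deriv s 0) = g 0 := by
  have hcomp : HasDerivAt (μ ∘ s) (fderiv ℝ μ (s 0) (deriv s 0)) 0 :=
    hμ.hasFDerivAt.comp_hasDerivAt 0 hs.hasDerivAt
  rw [show μ ∘ s = fun β => β • g β from funext hfix] at hcomp
  exact hcomp.unique (hasDerivAt_smul_self_zero hg)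

theorem LinearMap.apply_eq_dotProduct_apply_single {ι R : Type*} [Fintype ι] [DecidableEq ι]
    [CommSemiring R] (L : (ι → R) →ₗ[R] R) (v : ι → R) :
    L v = v ⬝ᵥ fun i => L (Pi.single i 1) := by
  rw [L.pi_apply_eq_sum_univ v, dotProduct]
  refine Finset.sum_congr rfl fun i _ => ?_
  rw [smul_eq_mul]
  congr 2
  ext j
  simp only [Pi.single_apply, eq_comm]

/-- Nudging towards low-cost configurations: along a differentiable curve `β ↦ s^β`
of fixed points of the augmented field `μ^β = μ − β∇C`, if the Jacobian of `μ` at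
`s⁰` is negative semidefinite then `d/dβ C(s^β) ≤ 0` at `β = 0`. -/
theorem stmt_7 {n : ℕ}
    (μ : (Fin n → ℝ) → (Fin n → ℝ))
    (C : (Fin n → ℝ) → ℝ)
    (hμ : ContDiff ℝ 1 μ)
    (hC : ContDiff ℝ 1 C)
    (s : ℝ → (Fin n → ℝ))
    (hs : Differentiable ℝ s)
    -- `μ^β(s^β) = 0`, i.e. `μ(s^β) = β ∇C(s^β)`
    (hfix : ∀ β, μ (s β) = β • (fun i => fderiv ℝ C (s β) (Pi.single i 1)))
    -- stability: the Jacobian `∂μ^β/∂s(s^β)` at `β = 0` is negative semidefinite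
    (hstab : ∀ v : Fin n → ℝ, v ⬝ᵥ (fderiv ℝ μ (s 0) v) ≤ 0) :
    deriv (fun β => C (s β)) 0 ≤ 0 := by
  have hgrad : Continuous fun β i => fderiv ℝ C (s β) (Pi.single i 1) :=
    continuous_pi fun i => ((hC.continuous_fderiv one_ne_zero).comp hs.continuous).clm_apply
      continuous_const
  have hjac : fderiv ℝ μ (s 0) (deriv s 0) = fun i => fderiv ℝ C (s 0) (Pi.single i 1) :=
    fderiv_apply_deriv_eq_of_comp_eq_smul ((hμ.differentiable one_ne_zero) _) (hs 0)
      hgrad.continuousAt hfix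
  have hchain : deriv (fun β => C (s β)) 0 = fderiv ℝ C (s 0) (deriv s 0) :=
    ((hC.differentiable one_ne_zero) _).hasFDerivAt.comp_hasDerivAt 0 (hs 0).hasDerivAt |>.deriv
  calc deriv (fun β => C (s β)) 0
      = deriv s 0 ⬝ᵥ fun i => fderiv ℝ C (s 0) (Pi.single i 1) := by
        rw [hchain]
        exact (fderiv ℝ C (s 0)).toLinearMap.apply_eq_dotProduct_apply_single _
    _ = deriv s 0 ⬝ᵥ fderiv ℝ μ (s 0) (deriv s 0) := by rw [hjac]
    _ ≤ 0 := hstab _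
end

section
/- Let μ : ℝⁿ → ℝⁿ be continuously differentiable with flow S(s, t) (i.e. ∂S/∂t(s,t) = μ(S(s,t)), S(s,0) = s), let C : ℝⁿ → ℝ be continuously differentiable, and define L(s, t) = C(S(s, t)). Then for all s and t, ∂L/∂t(s, t) = ∇_s L(s, t) · μ(s). -/
/-!
Solutions of `ẋ = μ x` are unique when `μ` is locally Lipschitz, so the flow has the semigroup
property `S (S s u) t = S s (u + t)`. Differentiating this identity in `u` at `u = 0` gives
`D_s S(s, t) (μ s) = μ (S s t) = ∂S/∂t (s, t)`, and the chain rule through `C` finishes.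
-/

open Set Topology

variable {E : Type*} [NormedAddCommGroup E] [NormedSpace ℝ E] {μ : E → E}

theorem LocallyLipschitz.eq_of_hasDerivAt_of_eq (hμ : LocallyLipschitz μ) {f g : ℝ → E}
    (hf : ∀ t, HasDerivAt f (μ (f t)) t) (hg : ∀ t, HasDerivAt g (μ (g t)) t)
    {t₀ : ℝ} (h₀ : f t₀ = g t₀) : f = g := by
  have hclosed : IsClosed {t | f t = g t} :=
    isClosed_eq (continuous_iff_continuousAt.2 fun t => (hf t).continuousAt)
      (continuous_iff_continuousAt.2 fun t => (hg t).continuousAt)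
  have hopen : IsOpen {t | f t = g t} := by
    refine isOpen_iff_mem_nhds.2 fun t₁ (ht₁ : f t₁ = g t₁) => ?_
    obtain ⟨K, u, hu, hK⟩ := hμ (f t₁)
    have hfu : ∀ᶠ t in 𝓝 t₁, HasDerivAt f (μ (f t)) t ∧ f t ∈ u :=
      ((hf t₁).continuousAt.eventually_mem hu).mono fun t ht => ⟨hf t, ht⟩
    have hgu : ∀ᶠ t in 𝓝 t₁, HasDerivAt g (μ (g t)) t ∧ g t ∈ u :=
      ((hg t₁).continuousAt.eventually_mem (ht₁ ▸ hu)).mono fun t ht => ⟨hg t, ht⟩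
    exact ODE_solution_unique_of_eventually (v := fun _ => μ) (s := fun _ => u)
      (.of_forall fun _ => hK) hfu hgu ht₁
  exact funext (eq_univ_iff_forall.1 (IsClopen.eq_univ ⟨hclosed, hopen⟩ ⟨t₀, h₀⟩))

section Flow

variable {S : E → ℝ → E} (hμ : LocallyLipschitz μ) (hS₀ : ∀ s, S s 0 = s)
  (hflow : ∀ s t, HasDerivAt (S s) (μ (S s t)) t)
include hμ hS₀ hflow

theorem flow_flow_eq_add (s : E) (u t : ℝ) : S (S s u) t = S s (u + t) := by
  have hshift : ∀ t, HasDerivAt (fun t => S s (u + t)) (μ (S s (u + t))) t :=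
    fun t => (hflow s (u + t)).comp_const_add u t
  refine congrFun (hμ.eq_of_hasDerivAt_of_eq (hflow (S s u)) hshift (t₀ := 0) ?_) t
  simp only [hS₀, add_zero]

theorem fderiv_flow_apply {s : E} {t : ℝ} (hSt : DifferentiableAt ℝ (fun s' => S s' t) s) :
    fderiv ℝ (fun s' => S s' t) s (μ s) = μ (S s t) := by
  have hspace : HasDerivAt (fun u => S (S s u) t) (fderiv ℝ (fun s' => S s' t) s (μ s)) 0 := by
    rw [← hS₀ s] at hSt
    simpa only [hS₀, Function.comp_def] using hSt.hasFDerivAt.comp_hasDerivAt 0 (hflow s 0)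
  have htime : HasDerivAt (fun u => S s (u + t)) (μ (S s t)) 0 :=
    (hflow s (0 + t)).comp_add_const 0 t |>.congr_deriv (by rw [zero_add])
  simp only [flow_flow_eq_add hμ hS₀ hflow] at hspace
  exact hspace.unique htime

end Flow

/-- Kolmogorov backward equation for the projected cost along a deterministic flow:
if `L(s, t) = C(S(s, t))` where `S` is the flow of `μ`, then
`∂L/∂t(s, t) = ∇_s L(s, t) · μ(s)`. -/
theorem stmt_11 {n : ℕ}
    (μ : (Fin n → ℝ) → (Fin n → ℝ))
    (hμ : ContDiff ℝ 1 μ)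
    (C : (Fin n → ℝ) → ℝ)
    (hC : ContDiff ℝ 1 C)
    (S : (Fin n → ℝ) → ℝ → (Fin n → ℝ))
    (hSsmooth : ContDiff ℝ 1 (fun q : (Fin n → ℝ) × ℝ => S q.1 q.2))
    (hS0 : ∀ s, S s 0 = s)
    (hflow : ∀ s t, HasDerivAt (S s) (μ (S s t)) t)
    (L : (Fin n → ℝ) → ℝ → ℝ)
    (hL : ∀ s t, L s t = C (S s t)) :
    ∀ s t, deriv (fun t' => L s t') t = fderiv ℝ (fun s' => L s' t) s (μ s) := by
  intro s t
  have hSt : DifferentiableAt ℝ (fun s' => S s' t) s :=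
    ((hSsmooth.differentiable one_ne_zero).comp (differentiable_id.prodMk (differentiable_const t))) s
  have hCd : DifferentiableAt ℝ C (S s t) := hC.differentiable one_ne_zero _
  simp only [hL]
  rw [fderiv_fun_comp (f := fun s' => S s' t) s hCd hSt, ContinuousLinearMap.comp_apply,
    fderiv_flow_apply hμ.locallyLipschitz hS0 hflow hSt]
  exact (hCd.hasFDerivAt.comp_hasDerivAt t (hflow s t)).deriv
end

section
/- In the setting of the previous statement, assume L is C². Let s⁰ be a point with μ(s⁰) = 0. Then the map t ↦ ∇_s L(s⁰, t) satisfies the linear ODE d/dt ∇_s L(s⁰, t) = (∂μ/∂s(s⁰))ᵀ · ∇_s L(s⁰, t), with initial condition ∇_s L(s⁰, 0) = ∇C(s⁰). -/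
/-!
The flow `S` of `μ` is a one-parameter group, so `L(s, t + h) = L(S(s, h), t)`; differentiating in
`h` at `0` gives the backward equation `∂ₜL(s, t) = ∂ₛL(s, t) · μ(s)`. Differentiating this identity
in `s` produces `∂ₛ∂ₜL = ∂ₛ²L · μ + ∂ₛL · ∂μ/∂s`, and at a zero `s⁰` of `μ` the Hessian term drops
out. Symmetry of second derivatives turns `∂ₛ∂ₜL` into `∂ₜ∂ₛL`, which is the claimed linear ODE
for `t ↦ ∇ₛL(s⁰, t)`.
-/

section Flow

variable {E : Type*} [NormedAddCommGroup E] [NormedSpace ℝ E] {μ : E → E}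

theorem ode_solution_unique_of_contDiff (hμ : ContDiff ℝ 1 μ) {y z : ℝ → E}
    (hy : ∀ t, HasDerivAt y (μ (y t)) t) (hz : ∀ t, HasDerivAt z (μ (z t)) t)
    (h0 : y 0 = z 0) : y = z := by
  have hyc : Continuous y := continuous_iff_continuousAt.2 fun t => (hy t).continuousAt
  have hzc : Continuous z := continuous_iff_continuousAt.2 fun t => (hz t).continuousAt
  have hopen : IsOpen {t | y t = z t} := by
    refine isOpen_iff_mem_nhds.2 fun t (ht : y t = z t) => ?_
    obtain ⟨K, u, hu, hlip⟩ := (hμ.contDiffAt (x := y t)).exists_lipschitzOnWith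
    refine ODE_solution_unique_of_eventually (v := fun _ => μ) (s := fun _ => u)
      (.of_forall fun _ => hlip) ?_ ?_ ht
    · filter_upwards [hyc.continuousAt.preimage_mem_nhds hu] with t' ht' using ⟨hy t', ht'⟩
    · filter_upwards [hzc.continuousAt.preimage_mem_nhds (ht ▸ hu)] with t' ht'
        using ⟨hz t', ht'⟩
  have hclopen : IsClopen {t | y t = z t} := ⟨isClosed_eq hyc hzc, hopen⟩
  exact funext (Set.eq_univ_iff_forall.1 (hclopen.eq_univ ⟨0, h0⟩))

theorem flow_flow_eq_flow_add (hμ : ContDiff ℝ 1 μ) {S : E → ℝ → E} (hS0 : ∀ s, S s 0 = s)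
    (hflow : ∀ s t, HasDerivAt (S s) (μ (S s t)) t) (s : E) (h t : ℝ) :
    S (S s h) t = S s (t + h) :=
  congrFun (ode_solution_unique_of_contDiff hμ (hflow _)
    (fun t => (hflow s (t + h)).comp_add_const t h) (by rw [hS0, zero_add])) t

end Flow

section PartialDerivatives

open ContinuousLinearMap

variable {E F G : Type*} [NormedAddCommGroup E] [NormedSpace ℝ E]
  [NormedAddCommGroup F] [NormedSpace ℝ F] [NormedAddCommGroup G] [NormedSpace ℝ G]

theorem DifferentiableAt.fderiv_comp_prodMk_left {f : E × G → F} {s : E} {t : G}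
    (hf : DifferentiableAt ℝ f (s, t)) :
    fderiv ℝ (fun s' => f (s', t)) s = (fderiv ℝ f (s, t)).comp (inl ℝ E G) :=
  (hf.hasFDerivAt.comp s (hasFDerivAt_prodMk_left s t)).fderiv

theorem fderiv_apply_zero_one_eq_of_shift {μ : E → E} {f : E × ℝ → F} {S : E → ℝ → E}
    {s : E} {t : ℝ} (hf : DifferentiableAt ℝ f (s, t)) (hS0 : S s 0 = s)
    (hS : HasDerivAt (S s) (μ s) 0) (hshift : ∀ h, f (s, t + h) = f (S s h, t)) :
    fderiv ℝ f (s, t) (0, 1) = fderiv ℝ f (s, t) (μ s, 0) := by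
  have htime : HasDerivAt (fun h => f (s, t + h)) (fderiv ℝ f (s, t) (0, 1)) 0 := by
    simpa [Function.comp_def] using hf.hasFDerivAt.comp_hasDerivAt_of_eq 0
      ((hasDerivAt_const (0 : ℝ) s).prodMk ((hasDerivAt_id' 0).const_add t)) (by simp)
  have hspace : HasDerivAt (fun h => f (S s h, t)) (fderiv ℝ f (s, t) (μ s, 0)) 0 := by
    simpa [Function.comp_def] using hf.hasFDerivAt.comp_hasDerivAt_of_eq 0
      (hS.prodMk (hasDerivAt_const 0 t)) (by rw [hS0])
  exact htime.unique (funext hshift ▸ hspace)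

theorem hasDerivAt_fderiv_comp_inl_of_map_eq_zero {f : E × ℝ → F} (hf : ContDiff ℝ 2 f)
    {μ : E → E} {s₀ : E} (hμ : DifferentiableAt ℝ μ s₀) (hfix : μ s₀ = 0) {t : ℝ}
    (hback : ∀ s, fderiv ℝ f (s, t) (0, 1) = fderiv ℝ f (s, t) (μ s, 0)) :
    HasDerivAt (fun t' => (fderiv ℝ f (s₀, t')).comp (inl ℝ E ℝ))
      (((fderiv ℝ f (s₀, t)).comp (inl ℝ E ℝ)).comp (fderiv ℝ μ s₀)) t := by
  set B := fderiv ℝ (fderiv ℝ f) (s₀, t)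
  have hDf : DifferentiableAt ℝ (fderiv ℝ f) (s₀, t) :=
    (hf.fderiv_right (m := 1) (by norm_num)).differentiable one_ne_zero _
  have htime : HasDerivAt (fun t' => fderiv ℝ f (s₀, t')) (B (0, 1)) t := by
    simpa [Function.comp_def] using
      hDf.hasFDerivAt.comp_hasDerivAt t ((hasDerivAt_const t s₀).prodMk (hasDerivAt_id t))
  have hspace : HasFDerivAt (fun s => fderiv ℝ f (s, t)) (B.comp (inl ℝ E ℝ)) s₀ :=
    hDf.hasFDerivAt.comp s₀ (hasFDerivAt_prodMk_left s₀ t)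
  have hmixed (v : E) : B (v, 0) (0, 1) = fderiv ℝ f (s₀, t) (fderiv ℝ μ s₀ v, 0) := by
    have h1 := hspace.clm_apply (hasFDerivAt_const ((0 : E), (1 : ℝ)) s₀)
    have h2 := hspace.clm_apply (hμ.hasFDerivAt.prodMk (hasFDerivAt_const (0 : ℝ) s₀))
    simp only [hback] at h1
    have := congrArg (· v) (h1.unique h2)
    -- the Hessian term `B (v, 0) (μ s₀, 0)` vanishes because `μ s₀ = 0`
    simpa [hfix, ← Prod.zero_eq_mk] using this
  have hsymm := (hf.contDiffAt (x := (s₀, t))).isSymmSndFDerivAt (by simp)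
  convert htime.clm_comp (hasDerivAt_const t (inl ℝ E ℝ)) using 1
  ext v
  simp [B, hsymm (0, 1) (v, 0), hmixed]

end PartialDerivatives

open Matrix

theorem ContinuousLinearMap.apply_apply_single_eq_transpose_mulVec {n : ℕ}
    (φ : (Fin n → ℝ) →L[ℝ] ℝ) (A : (Fin n → ℝ) →L[ℝ] (Fin n → ℝ)) :
    (fun i => φ (A (Pi.single i 1))) =
      (Matrix.of fun i j => A (Pi.single j 1) i)ᵀ.mulVec (fun i => φ (Pi.single i 1)) := by
  ext i
  conv_lhs => rw [pi_eq_sum_univ' (A (Pi.single i 1)), map_sum]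
  simp [Matrix.mulVec, dotProduct]

theorem hasDerivAt_apply_single_of_hasDerivAt_comp {n : ℕ} {G : ℝ → (Fin n → ℝ) →L[ℝ] ℝ}
    {A : (Fin n → ℝ) →L[ℝ] (Fin n → ℝ)} {t : ℝ} (hG : HasDerivAt G ((G t).comp A) t) :
    HasDerivAt (fun t' => fun i => G t' (Pi.single i 1))
      ((Matrix.of fun i j => A (Pi.single j 1) i)ᵀ.mulVec (fun i => G t (Pi.single i 1))) t := by
  rw [← (G t).apply_apply_single_eq_transpose_mulVec A]
  exact hasDerivAt_pi.2 fun i => by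
    simpa using hG.clm_apply (hasDerivAt_const t (Pi.single i (1 : ℝ)))

theorem stmt_12_general {n : ℕ}
    (μ : (Fin n → ℝ) → (Fin n → ℝ))
    (hμ : ContDiff ℝ 1 μ)
    (C : (Fin n → ℝ) → ℝ)
    (S : (Fin n → ℝ) → ℝ → (Fin n → ℝ))
    (hS0 : ∀ s, S s 0 = s)
    (hflow : ∀ s t, HasDerivAt (S s) (μ (S s t)) t)
    (L : (Fin n → ℝ) → ℝ → ℝ)
    (hL : ∀ s t, L s t = C (S s t))
    (hL2 : ContDiff ℝ 2 (fun q : (Fin n → ℝ) × ℝ => L q.1 q.2))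
    (s0 : Fin n → ℝ)
    (hfix : μ s0 = 0) :
    -- `g t = ∇_s L(s⁰, t)`
    (fun i => fderiv ℝ (fun s' => L s' 0) s0 (Pi.single i 1))
        = (fun i => fderiv ℝ C s0 (Pi.single i 1)) ∧
    ∀ t, HasDerivAt (fun t' => (fun i => fderiv ℝ (fun s' => L s' t') s0 (Pi.single i 1)))
      ((Matrix.of fun i j => fderiv ℝ μ s0 (Pi.single j 1) i)ᵀ.mulVec
        (fun i => fderiv ℝ (fun s' => L s' t) s0 (Pi.single i 1))) t := by
  set f : (Fin n → ℝ) × ℝ → ℝ := fun q => L q.1 q.2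
  have hf : Differentiable ℝ f := hL2.differentiable two_ne_zero
  have hpartial : ∀ t, fderiv ℝ (fun s' => L s' t) s0 =
      (fderiv ℝ f (s0, t)).comp (ContinuousLinearMap.inl ℝ _ ℝ) := fun t => (hf _).fderiv_comp_prodMk_left
  have hback : ∀ s t, fderiv ℝ f (s, t) (0, 1) = fderiv ℝ f (s, t) (μ s, 0) := fun s t =>
    fderiv_apply_zero_one_eq_of_shift (hf _) (hS0 s) (by simpa [hS0] using hflow s 0) fun h => by
      simp only [f, hL, flow_flow_eq_flow_add hμ hS0 hflow]
  refine ⟨by simp_rw [hL, hS0], fun t => ?_⟩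
  have hode := hasDerivAt_fderiv_comp_inl_of_map_eq_zero hL2
    (hμ.differentiable one_ne_zero s0) hfix (hback · t)
  simp only [← hpartial] at hode
  exact hasDerivAt_apply_single_of_hasDerivAt_comp hode

/-- Key step of Theorem 2 (Recurrent Backpropagation): at a fixed point `s⁰` of `μ`,
the gradient `∇_s L(s⁰, t)` of the projected cost satisfies the linear ODE
`d/dt ∇_s L(s⁰, t) = (∂μ/∂s(s⁰))ᵀ ∇_s L(s⁰, t)` with initial condition `∇C(s⁰)`. -/
theorem stmt_12 {n : ℕ}
    (μ : (Fin n → ℝ) → (Fin n → ℝ))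
    (hμ : ContDiff ℝ 1 μ)
    (C : (Fin n → ℝ) → ℝ)
    (hC : ContDiff ℝ 1 C)
    (S : (Fin n → ℝ) → ℝ → (Fin n → ℝ))
    (hSsmooth : ContDiff ℝ 1 (fun q : (Fin n → ℝ) × ℝ => S q.1 q.2))
    (hS0 : ∀ s, S s 0 = s)
    (hflow : ∀ s t, HasDerivAt (S s) (μ (S s t)) t)
    (L : (Fin n → ℝ) → ℝ → ℝ)
    (hL : ∀ s t, L s t = C (S s t))
    (hL2 : ContDiff ℝ 2 (fun q : (Fin n → ℝ) × ℝ => L q.1 q.2))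
    (s0 : Fin n → ℝ)
    (hfix : μ s0 = 0) :
    -- `g t = ∇_s L(s⁰, t)`
    (fun i => fderiv ℝ (fun s' => L s' 0) s0 (Pi.single i 1))
        = (fun i => fderiv ℝ C s0 (Pi.single i 1)) ∧
    ∀ t, HasDerivAt (fun t' => (fun i => fderiv ℝ (fun s' => L s' t') s0 (Pi.single i 1)))
      ((Matrix.of fun i j => fderiv ℝ μ s0 (Pi.single j 1) i)ᵀ.mulVec
        (fun i => fderiv ℝ (fun s' => L s' t) s0 (Pi.single i 1))) t :=
  stmt_12_general μ hμ C S hS0 hflow L hL hL2 s0 hfix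
end

section
/- In the setting of the previous statement, define S̃(t) := − (d/dt) v(t) where v(t) = (∂S^β/∂β)|_{β=0}(s⁰, t). Then S̃ satisfies S̃(0) = ∇C(s⁰) and dS̃/dt = ∂μ/∂s(s⁰) · S̃(t). -/
/-!
At `β = 0` the trajectory started at the fixed point `s⁰` stays there, by local uniqueness of
solutions near an equilibrium of a locally Lipschitz field. Differentiating the flow equation
`∂ₜS = μ(S) - β ∇C(S)` in `β` at `β = 0`, and swapping the two partial derivatives of the `C²`
map `(β, t) ↦ S^β(s⁰, t)`, shows that `v` solves `v' = A v - ∇C(s⁰)` with `A = ∂μ/∂s(s⁰)` and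
`v(0) = 0`. Differentiating this affine equation once more in `t` gives the claim.
-/

open Set Filter Topology

variable {E F : Type*} [NormedAddCommGroup E] [NormedSpace ℝ E]
  [NormedAddCommGroup F] [NormedSpace ℝ F]

theorem ODE_solution_eq_const_of_equilibrium {f : E → E} {x₀ : E} {K : NNReal} {U : Set E}
    (hU : U ∈ 𝓝 x₀) (hf : LipschitzOnWith K f U) (hx₀ : f x₀ = 0) {γ : ℝ → E}
    (hγ : ∀ t, HasDerivAt γ (f (γ t)) t) {t₀ : ℝ} (hγt₀ : γ t₀ = x₀) (t : ℝ) : γ t = x₀ := by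
  have hcont : Continuous γ := continuous_iff_continuousAt.2 fun t => (hγ t).continuousAt
  have hopen : IsOpen {t | γ t = x₀} := by
    refine isOpen_iff_mem_nhds.2 fun t₁ (ht₁ : γ t₁ = x₀) => ?_
    have hmem : ∀ᶠ t in 𝓝 t₁, γ t ∈ U := hcont.continuousAt.preimage_mem_nhds (ht₁ ▸ hU)
    have hconst : ∀ᶠ t in 𝓝 t₁, HasDerivAt (fun _ => x₀) (f x₀) t ∧ x₀ ∈ U :=
      .of_forall fun t => ⟨hx₀ ▸ hasDerivAt_const t x₀, mem_of_mem_nhds hU⟩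
    exact ODE_solution_unique_of_eventually (v := fun _ => f) (s := fun _ => U)
      (.of_forall fun _ => hf) (hmem.mono fun t ht => ⟨hγ t, ht⟩) hconst ht₁
  have huniv : {t | γ t = x₀} = univ :=
    IsClopen.eq_univ ⟨isClosed_eq hcont continuous_const, hopen⟩ ⟨t₀, hγt₀⟩
  exact eq_univ_iff_forall.1 huniv t

theorem HasFDerivAt.hasDerivAt_fst_slice {G : ℝ × ℝ → E} {G' : ℝ × ℝ →L[ℝ] E} {b t : ℝ}
    (h : HasFDerivAt G G' (b, t)) : HasDerivAt (fun β => G (β, t)) (G' (1, 0)) b :=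
  h.comp_hasDerivAt b ((hasDerivAt_id b).prodMk (hasDerivAt_const b t))

theorem HasFDerivAt.hasDerivAt_snd_slice {G : ℝ × ℝ → E} {G' : ℝ × ℝ →L[ℝ] E} {b t : ℝ}
    (h : HasFDerivAt G G' (b, t)) : HasDerivAt (fun s => G (b, s)) (G' (0, 1)) t :=
  h.comp_hasDerivAt t ((hasDerivAt_const t b).prodMk (hasDerivAt_id t))

/-- Schwarz: the mixed partial derivatives of a `C²` function of two real variables agree. -/
theorem hasDerivAt_deriv_fst_of_contDiff {f : ℝ → ℝ → E}
    (hf : ContDiff ℝ 2 (fun q : ℝ × ℝ => f q.1 q.2)) (b t : ℝ) :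
    HasDerivAt (fun s => deriv (fun β => f β s) b) (deriv (fun β => deriv (f β) t) b) t := by
  set F : ℝ × ℝ → E := fun q => f q.1 q.2
  have hF' : ∀ q, HasFDerivAt F (fderiv ℝ F q) q := fun q =>
    (hf.differentiable two_ne_zero q).hasFDerivAt
  have hF'' : ∀ q w, HasFDerivAt (fun q => fderiv ℝ F q w)
      ((ContinuousLinearMap.apply ℝ E w).comp (fderiv ℝ (fderiv ℝ F) q)) q := fun q w =>
    (ContinuousLinearMap.apply ℝ E w).hasFDerivAt.comp q
      ((hf.fderiv_right le_rfl).differentiable one_ne_zero q).hasFDerivAt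
  have hfst : (fun s => deriv (fun β => f β s) b) = fun s => fderiv ℝ F (b, s) (1, 0) :=
    funext fun s => (hF' (b, s)).hasDerivAt_fst_slice.deriv
  have hsnd : (fun β => deriv (f β) t) = fun β => fderiv ℝ F (β, t) (0, 1) :=
    funext fun β => (hF' (β, t)).hasDerivAt_snd_slice.deriv
  have hsymm : IsSymmSndFDerivAt ℝ F (b, t) := hf.contDiffAt.isSymmSndFDerivAt (by simp)
  rw [hfst, hsnd, (hF'' (b, t) (0, 1)).hasDerivAt_fst_slice.deriv]
  convert (hF'' (b, t) (1, 0)).hasDerivAt_snd_slice using 1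
  exact hsymm _ _

theorem HasDerivAt.comp_sub_smul_comp {μ g : E → F} {μ' : E →L[ℝ] F} {γ : ℝ → E} {w : E}
    (hγ : HasDerivAt γ w 0) (hμ : HasFDerivAt μ μ' (γ 0)) (hg : DifferentiableAt ℝ g (γ 0)) :
    HasDerivAt (fun β => μ (γ β) - β • g (γ β)) (μ' w - g (γ 0)) 0 := by
  have hsmul := (hasDerivAt_id (0 : ℝ)).smul (hg.hasFDerivAt.comp_hasDerivAt 0 hγ)
  simp only [id, zero_smul, one_smul, zero_add] at hsmul
  exact (hμ.comp_hasDerivAt 0 hγ).sub hsmul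

theorem hasDerivAt_neg_deriv_of_affine {A : E →L[ℝ] E} {c : E} {v : ℝ → E}
    (hv : ∀ t, HasDerivAt v (A (v t) - c) t) (t : ℝ) :
    HasDerivAt (fun t => -deriv v t) (A (-deriv v t)) t := by
  have hderiv : (fun t => -deriv v t) = fun t => c - A (v t) :=
    funext fun t => by rw [(hv t).deriv, neg_sub]
  rw [hderiv, (hv t).deriv, map_neg]
  exact (A.hasFDerivAt.comp_hasDerivAt t (hv t)).const_sub c

/-- Theorem 3 (temporal derivatives in Equilibrium Propagation): with
`v(t) = (∂S^β/∂β)|_{β=0}(s⁰, t)`, the rescaled temporal derivative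
`S̃(t) = −dv/dt(t)` satisfies `S̃(0) = ∇C(s⁰)` and `dS̃/dt = ∂μ/∂s(s⁰) · S̃(t)`. -/
theorem stmt_14 {n : ℕ}
    (μ : (Fin n → ℝ) → (Fin n → ℝ))
    (hμ : ContDiff ℝ 1 μ)
    (C : (Fin n → ℝ) → ℝ)
    (hC : ContDiff ℝ 2 C)
    (s0 : Fin n → ℝ)
    (hfix : μ s0 = 0)
    (S : ℝ → (Fin n → ℝ) → ℝ → (Fin n → ℝ))
    (hS0 : ∀ β s, S β s 0 = s)
    (hflow : ∀ β t, HasDerivAt (S β s0)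
      (μ (S β s0 t) - β • (fun i => fderiv ℝ C (S β s0 t) (Pi.single i 1))) t)
    (hSsmooth : ContDiff ℝ 2 (fun q : ℝ × ℝ => S q.1 s0 q.2)) :
    -- `S̃ t = −(d/dt) v(t)` where `v t = (∂S^β/∂β)|_{β=0}(s⁰, t)`
    (-(deriv (fun t' => deriv (fun β => S β s0 t') 0) 0)
        = (fun i => fderiv ℝ C s0 (Pi.single i 1))) ∧
    ∀ t, HasDerivAt (fun t' => -(deriv (fun t'' => deriv (fun β => S β s0 t'') 0) t'))
      (fderiv ℝ μ s0 (-(deriv (fun t'' => deriv (fun β => S β s0 t'') 0) t))) t := by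
  set v : ℝ → Fin n → ℝ := fun t => deriv (fun β => S β s0 t) 0
  set grad : (Fin n → ℝ) → Fin n → ℝ := fun x i => fderiv ℝ C x (Pi.single i 1)
  obtain ⟨K, U, hU, hlip⟩ := hμ.contDiffAt.exists_lipschitzOnWith (x := s0)
  have hrest : ∀ t, S 0 s0 t = s0 :=
    ODE_solution_eq_const_of_equilibrium hU hlip hfix (by simpa using hflow 0) (hS0 0 s0)
  have hgrad : DifferentiableAt ℝ grad s0 := by
    have : ContDiff ℝ 1 grad :=
      contDiff_pi.2 fun i => (hC.fderiv_right le_rfl).clm_apply contDiff_const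
    exact this.differentiable one_ne_zero s0
  have hv0 : v 0 = 0 := by simp [v, hS0]
  have hv : ∀ t, HasDerivAt v (fderiv ℝ μ s0 (v t) - grad s0) t := by
    intro t
    have hβ : HasDerivAt (fun β => S β s0 t) (v t) 0 :=
      ((hSsmooth.differentiable two_ne_zero (0, t)).hasFDerivAt.hasDerivAt_fst_slice
        ).differentiableAt.hasDerivAt
    have hlin := hβ.comp_sub_smul_comp (hrest t ▸ (hμ.differentiable one_ne_zero s0).hasFDerivAt)
      (hrest t ▸ hgrad)
    rw [hrest t] at hlin
    have hswap := hasDerivAt_deriv_fst_of_contDiff (f := fun β => S β s0) hSsmooth 0 t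
    simp only [(hflow _ t).deriv] at hswap
    rwa [hlin.deriv] at hswap
  refine ⟨?_, hasDerivAt_neg_deriv_of_affine hv⟩
  rw [(hv 0).deriv, hv0, map_zero, zero_sub, neg_neg]
end
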